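/- arXiv:2212.13620 — 5 statements merged into one kernel-verified Lean document; each statement's English description precedes it below -/
import Mathlib

section
/- Let K be a field, N ≥ 3, and R = K[x_1,x_2,x_3,y_0,y_1,...,y_N] a polynomial ring in N+4 variables. Let I = (x_1^2, x_1x_2, x_1x_3, x_1y_0 + x_2^N, x_1y_1 + x_2^{N-1}x_3, ..., x_1y_N + x_3^N). Then the radical of I equals (x_1,x_2,x_3), so I has height three. -/
open MvPolynomial

/-- The variables `x₁, x₂, x₃` of `K[x₁,x₂,x₃,y₀,…,y_N]`. -/
noncomputable def xv {K : Type*} [Field K] {N : ℕ} (i : Fin 3) :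
    MvPolynomial (Fin 3 ⊕ Fin (N + 1)) K :=
  X (Sum.inl i)

/-- The variables `y₀, …, y_N` of `K[x₁,x₂,x₃,y₀,…,y_N]`. -/
noncomputable def yv {K : Type*} [Field K] {N : ℕ} (j : Fin (N + 1)) :
    MvPolynomial (Fin 3 ⊕ Fin (N + 1)) K :=
  X (Sum.inr j)

/-- The ideal `I = (x₁², x₁x₂, x₁x₃, x₁y₀ + x₂^N, …, x₁y_N + x₃^N)`. -/
noncomputable def exIdeal (K : Type*) [Field K] (N : ℕ) :
    Ideal (MvPolynomial (Fin 3 ⊕ Fin (N + 1)) K) :=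
  Ideal.span ({xv 0 ^ 2, xv 0 * xv 1, xv 0 * xv 2} ∪
    Set.range (fun j : Fin (N + 1) =>
      xv 0 * yv j + xv 1 ^ (N - (j : ℕ)) * xv 2 ^ (j : ℕ)))

/-- The height of an ideal: the infimum of the heights of the primes containing it. -/
noncomputable def idealHeight {R : Type*} [CommRing R] (I : Ideal R) : ℕ∞ :=
  ⨅ (P : PrimeSpectrum R) (_ : I ≤ P.asIdeal), Order.height P

/-!
Since `x₁² ∈ I`, `x₁` lies in `√I`, and then the generators with `j = 0` and `j = N` put
`x₂ᴺ` and `x₃ᴺ` in `√I`. Conversely every generator lies in the prime `(x₁, x₂, x₃)`,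
so `√I = (x₁, x₂, x₃)` and `I` has the height of this prime. An ideal generated by `k`
variables has height `k`: adjoining the variables one at a time gives a chain of `k + 1`
primes, and Krull's height theorem gives the upper bound.
-/

namespace MvPolynomial

variable {R σ : Type*} [CommRing R]

theorem ker_killCompl_subtype_val (s : Set σ) :
    RingHom.ker
        (killCompl (R := R) (Subtype.val_injective : Function.Injective ((↑) : ↥sᶜ → σ))) =
      Ideal.span (X '' s) := by
  have hf : Function.Injective ((↑) : ↥sᶜ → σ) := Subtype.val_injective
  ext p
  rw [RingHom.mem_ker, mem_ideal_span_X_image]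
  constructor
  · intro hp d hd
    by_contra! hds
    have hrange : ↑d.support ⊆ Set.range ((↑) : ↥sᶜ → σ) := fun i hi =>
      ⟨⟨i, fun his => Finsupp.mem_support_iff.mp hi (hds i his)⟩, rfl⟩
    have hcoeff := coeff_killCompl hf (p := p) (s := d.comapDomain _ hf.injOn)
    rw [Finsupp.mapDomain_comapDomain _ hf _ hrange, hp, coeff_zero] at hcoeff
    exact mem_support_iff.mp hd hcoeff.symm
  · intro hp
    ext d
    rw [coeff_killCompl, coeff_zero]
    by_contra hne
    obtain ⟨i, his, hi⟩ := hp _ (mem_support_iff.mpr hne)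
    exact hi (Finsupp.mapDomain_of_notMem_range _ i fun ⟨j, hj⟩ => j.2 (hj ▸ his))

theorem isPrime_span_X_image [IsDomain R] (s : Set σ) :
    (Ideal.span (X '' s) : Ideal (MvPolynomial σ R)).IsPrime :=
  ker_killCompl_subtype_val (R := R) s ▸ RingHom.ker_isPrime _

theorem X_mem_span_X_image_iff [Nontrivial R] {s : Set σ} {a : σ} :
    (X a : MvPolynomial σ R) ∈ Ideal.span (X '' s) ↔ a ∈ s := by
  refine ⟨fun h => ?_, fun h => Ideal.subset_span ⟨a, h, rfl⟩⟩
  obtain ⟨i, his, hi⟩ :=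
    mem_ideal_span_X_image.mp h (Finsupp.single a 1) (by simp [support_X])
  rwa [(Finsupp.single_apply_ne_zero.mp hi).1] at his

theorem le_height_span_X_image [IsDomain R] (s : Finset σ) :
    (s.card : ℕ∞) ≤ (Ideal.span (X '' ↑s) : Ideal (MvPolynomial σ R)).height := by
  classical
  induction s using Finset.induction_on with
  | empty => simp
  | insert a s ha ih =>
    have hlt : (Ideal.span (X '' ↑s) : Ideal (MvPolynomial σ R)) <
        Ideal.span (X '' ↑(insert a s)) :=
      SetLike.lt_iff_le_and_exists.mpr
        ⟨Ideal.span_mono (Set.image_mono (by simp)), X a, X_mem_span_X_image_iff.mpr (by simp),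
          X_mem_span_X_image_iff.not.mpr (by simpa using ha)⟩
    have := isPrime_span_X_image (R := R) (s : Set σ)
    have := isPrime_span_X_image (R := R) (↑(insert a s) : Set σ)
    calc ((insert a s).card : ℕ∞) = s.card + 1 := by simp [Finset.card_insert_of_notMem ha]
      _ ≤ (Ideal.span (X '' ↑s) : Ideal (MvPolynomial σ R)).height + 1 := by gcongr
      _ ≤ _ := Ideal.height_add_one_le_of_lt_of_isPrime hlt

theorem height_span_X_image [IsDomain R] [IsNoetherianRing R] [Finite σ] (s : Finset σ) :
    (Ideal.span (X '' ↑s) : Ideal (MvPolynomial σ R)).height = s.card := by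
  classical
  refine le_antisymm ?_ (le_height_span_X_image s)
  have := isPrime_span_X_image (R := R) (s : Set σ)
  calc _ ≤ ((s.image X).card : ℕ∞) :=
        Ideal.height_le_card_of_mem_minimalPrimes_span_finset
          (by rw [Finset.coe_image, Ideal.minimalPrimes_eq_subsingleton_self]; rfl)
    _ ≤ s.card := by exact_mod_cast Finset.card_image_le

end MvPolynomial

section Height

variable {R : Type*} [CommRing R]

theorem idealHeight_eq_height (I : Ideal R) : idealHeight I = I.height := by
  refine le_antisymm ?_
    (le_iInf₂ fun P hP => (Ideal.height_mono hP).trans_eq P.height_eq_orderHeight)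
  rw [Ideal.height_eq_inf_minimalPrimes]
  refine le_iInf₂ fun J hJ => ?_
  exact (iInf₂_le (⟨J, hJ.1.1⟩ : PrimeSpectrum R) hJ.1.2).trans_eq
    (PrimeSpectrum.height_eq_orderHeight ⟨J, hJ.1.1⟩).symm

theorem Ideal.height_radical (I : Ideal R) : I.radical.height = I.height := by
  simp only [Ideal.height, Ideal.radical_minimalPrimes]

theorem Ideal.mem_radical_of_mul_add_mem {I : Ideal R} {a b c : R} (ha : a ∈ I.radical)
    (h : a * b + c ∈ I) : c ∈ I.radical := by
  simpa using I.radical.sub_mem (I.le_radical h) (I.radical.mul_mem_right b ha)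

end Height

section

variable {K : Type*} [Field K] {N : ℕ}

theorem span_xv_eq_span_X_image :
    Ideal.span {(xv 0 : MvPolynomial (Fin 3 ⊕ Fin (N + 1)) K), xv 1, xv 2} =
      Ideal.span (X '' ↑({.inl 0, .inl 1, .inl 2} : Finset (Fin 3 ⊕ Fin (N + 1)))) := by
  simp [Set.image_insert_eq, xv]

theorem exIdeal_le_span_xv (hN : 1 ≤ N) :
    exIdeal K N ≤ Ideal.span {xv 0, xv 1, xv 2} := by
  have hx (i : Fin 3) :
      (xv i : MvPolynomial (Fin 3 ⊕ Fin (N + 1)) K) ∈ Ideal.span {xv 0, xv 1, xv 2} :=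
    Ideal.subset_span (by fin_cases i <;> simp)
  rw [exIdeal, Ideal.span_le]
  rintro f ((rfl | rfl | rfl) | ⟨j, rfl⟩)
  · exact Ideal.pow_mem_of_mem _ (hx 0) 2 two_pos
  · exact Ideal.mul_mem_right _ _ (hx 0)
  · exact Ideal.mul_mem_right _ _ (hx 0)
  refine Ideal.add_mem _ (Ideal.mul_mem_right _ _ (hx 0)) ?_
  rcases Nat.eq_zero_or_pos (j : ℕ) with hj | hj
  · exact Ideal.mul_mem_right _ _ (Ideal.pow_mem_of_mem _ (hx 1) _ (by omega))
  · exact Ideal.mul_mem_left _ _ (Ideal.pow_mem_of_mem _ (hx 2) _ hj)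

theorem span_xv_le_radical_exIdeal :
    Ideal.span {xv 0, xv 1, xv 2} ≤ (exIdeal K N).radical := by
  have hgen (j : Fin (N + 1)) :
      xv 0 * yv j + xv 1 ^ (N - (j : ℕ)) * xv 2 ^ (j : ℕ) ∈ exIdeal K N :=
    Ideal.subset_span (Set.mem_union_right _ ⟨j, rfl⟩)
  have hx0 : xv 0 ∈ (exIdeal K N).radical :=
    ⟨2, Ideal.subset_span (Set.mem_union_left _ (by simp))⟩
  have hx1 : xv 1 ∈ (exIdeal K N).radical :=
    Ideal.mem_radical_of_pow_mem (m := N) <| Ideal.mem_radical_of_mul_add_mem hx0 <| by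
      simpa using hgen 0
  have hx2 : xv 2 ∈ (exIdeal K N).radical :=
    Ideal.mem_radical_of_pow_mem (m := N) <| Ideal.mem_radical_of_mul_add_mem hx0 <| by
      simpa using hgen (Fin.last N)
  rw [Ideal.span_le]
  rintro f (rfl | rfl | rfl) <;> assumption

end

theorem stmt7 {K : Type*} [Field K] (N : ℕ) (hN : 3 ≤ N) :
    (exIdeal K N).radical =
        Ideal.span {(xv 0 : MvPolynomial (Fin 3 ⊕ Fin (N + 1)) K), xv 1, xv 2} ∧
      idealHeight (exIdeal K N) = 3 := by
  have hprime : (Ideal.span {xv 0, xv 1, xv 2} : Ideal (MvPolynomial _ K)).IsPrime :=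
    span_xv_eq_span_X_image (K := K) (N := N) ▸ isPrime_span_X_image _
  have hrad : (exIdeal K N).radical = Ideal.span {xv 0, xv 1, xv 2} :=
    le_antisymm (hprime.radical_le_iff.mpr (exIdeal_le_span_xv (by omega)))
      span_xv_le_radical_exIdeal
  refine ⟨hrad, ?_⟩
  rw [idealHeight_eq_height, ← Ideal.height_radical, hrad, span_xv_eq_span_X_image,
    height_span_X_image]
  rfl
end

section
/- Let K be a field, N ≥ 3, and R = K[x_1,x_2,x_3,y_0,...,y_N]. Let I = (x_1^2, x_1x_2, x_1x_3, x_1y_0 + x_2^N, x_1y_1 + x_2^{N-1}x_3, ..., x_1y_N + x_3^N). Then y_0 is a nonzerodivisor on R/I. -/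
open MvPolynomial

/-!
Work in `A[x₁, x₂, x₃]` with `A = K[y₀, …, y_N]`; then `I = linkedIdeal x₁ y d`, where `d j` is
the exponent of `x₂^(N-j) x₃^j`. A polynomial `p` lies in `I` iff it lies in the monomial ideal
`(x₁, x₂^(N-j) x₃^j)` and its `A`-linear defect `coeff_{x₁} p - ∑ y_j coeff_{d j} p` vanishes:
the defect kills every multiple of a generator, and conversely `p - x₁ · defect p ∈ I` for `p` in
the monomial ideal. Multiplying by a nonzerodivisor `a ∈ A`, such as `y₀`, scales the defect by
`a` and does not change the support of `p`, so neither condition is affected.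
-/

namespace MvPolynomial

variable {σ A : Type*}

theorem mem_ideal_span_monomial_image_of_C_mul [CommSemiring A] {s : Set (σ →₀ ℕ)} {a : A}
    (ha : a ∈ nonZeroDivisors A) {p : MvPolynomial σ A}
    (h : C a * p ∈ Ideal.span ((fun e => monomial e (1 : A)) '' s)) :
    p ∈ Ideal.span ((fun e => monomial e (1 : A)) '' s) := by
  rw [mem_ideal_span_monomial_image] at h ⊢
  intro e he
  refine h e ?_
  rw [mem_support_iff, coeff_C_mul]
  exact fun h0 => mem_support_iff.mp he ((mul_left_mem_nonZeroDivisors_eq_zero_iff ha).mp h0)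

theorem X_mul_sub_C_coeff_zero_mem [CommRing A] (i₀ : σ) (w : MvPolynomial σ A) :
    X i₀ * (w - C (coeff 0 w)) ∈ Ideal.span (Set.range fun i => X i₀ * X i) := by
  have hw : w - C (coeff 0 w) ∈ Ideal.span (Set.range X) := by
    rw [← Set.image_univ, mem_ideal_span_X_image]
    intro m hm
    obtain ⟨i, hi⟩ : ∃ i, m i ≠ 0 := by
      by_contra! h
      obtain rfl : m = 0 := Finsupp.ext h
      simp at hm
    exact ⟨i, trivial, hi⟩
  have hprod := Ideal.mul_mem_mul (Ideal.mem_span_singleton_self (X i₀)) hw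
  rwa [Ideal.span_mul_span', Set.singleton_mul, ← Set.range_comp] at hprod

noncomputable section LinkedIdeal

variable [CommRing A] {ι : Type*} (i₀ : σ) (b : ι → A) (d : ι → σ →₀ ℕ)

def linkedIdeal : Ideal (MvPolynomial σ A) :=
  Ideal.span (Set.range (fun i => X i₀ * X i) ∪
    Set.range fun j => X i₀ * C (b j) + monomial (d j) 1)

def linkMonomialIdeal : Ideal (MvPolynomial σ A) :=
  Ideal.span ((fun e => monomial e (1 : A)) '' insert (Finsupp.single i₀ 1) (Set.range d))

def linkDefect [Fintype ι] : MvPolynomial σ A →ₗ[A] A :=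
  lcoeff A (Finsupp.single i₀ 1) - ∑ j, b j • lcoeff A (d j)

theorem linkDefect_apply [Fintype ι] (p : MvPolynomial σ A) :
    linkDefect i₀ b d p = coeff (Finsupp.single i₀ 1) p - ∑ j, b j * coeff (d j) p := by
  simp [linkDefect]

variable {i₀ d}

theorem linkedIdeal_le_linkMonomialIdeal : linkedIdeal i₀ b d ≤ linkMonomialIdeal i₀ d := by
  have hX : (X i₀ : MvPolynomial σ A) ∈ linkMonomialIdeal i₀ d :=
    Ideal.subset_span ⟨_, Set.mem_insert _ _, rfl⟩
  rw [linkedIdeal, Ideal.span_le]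
  rintro _ (⟨i, rfl⟩ | ⟨j, rfl⟩)
  · exact Ideal.mul_mem_right _ _ hX
  · exact add_mem (Ideal.mul_mem_right _ _ hX)
      (Ideal.subset_span ⟨d j, Set.mem_insert_of_mem _ ⟨j, rfl⟩, rfl⟩)

theorem X_mul_sub_C_coeff_zero_mem_linkedIdeal (w : MvPolynomial σ A) :
    X i₀ * (w - C (coeff 0 w)) ∈ linkedIdeal i₀ b d :=
  Ideal.span_mono Set.subset_union_left (X_mul_sub_C_coeff_zero_mem i₀ w)

variable [Fintype ι]

theorem linkDefect_X_mul (hd₀ : ∀ j, d j i₀ = 0) (q : MvPolynomial σ A) :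
    linkDefect i₀ b d (X i₀ * q) = coeff 0 q := by
  classical
  simp [linkDefect_apply, coeff_X_mul', hd₀]

theorem linkDefect_monomial_mul (hd₀ : ∀ j, d j i₀ = 0) (hd_ne : ∀ j, d j ≠ 0)
    (hd : ∀ j k, d j ≤ d k → j = k) (j : ι) (q : MvPolynomial σ A) :
    linkDefect i₀ b d (monomial (d j) 1 * q) = -(b j * coeff 0 q) := by
  classical
  have h_not_le : ¬ d j ≤ Finsupp.single i₀ 1 := fun h => hd_ne j <| Finsupp.ext fun i => by
    rcases eq_or_ne i i₀ with rfl | hi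
    · exact hd₀ j
    · simpa [Finsupp.single_apply, Ne.symm hi] using h i
  rw [linkDefect_apply, coeff_monomial_mul', if_neg h_not_le, zero_sub, Finset.sum_eq_single j]
  · simp [coeff_monomial_mul']
  · intro k _ hk
    rw [coeff_monomial_mul', if_neg fun h => hk (hd j k h).symm, mul_zero]
  · simp

theorem linkDefect_eq_zero_of_mem (hd₀ : ∀ j, d j i₀ = 0) (hd_ne : ∀ j, d j ≠ 0)
    (hd : ∀ j k, d j ≤ d k → j = k) {p : MvPolynomial σ A} (hp : p ∈ linkedIdeal i₀ b d) :
    linkDefect i₀ b d p = 0 := by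
  suffices ∀ q, linkDefect i₀ b d (q * p) = 0 by simpa using this 1
  refine Submodule.span_induction ?_ (by simp) ?_ ?_ hp
  · rintro _ (⟨i, rfl⟩ | ⟨j, rfl⟩) q
    · rw [mul_left_comm, linkDefect_X_mul b hd₀, ← constantCoeff_eq, map_mul, constantCoeff_X,
        mul_zero]
    · rw [mul_add, map_add, mul_left_comm, linkDefect_X_mul b hd₀, mul_comm q, mul_comm q,
        linkDefect_monomial_mul b hd₀ hd_ne hd, coeff_C_mul, add_neg_cancel]
  · intro x y _ _ hx hy q
    rw [mul_add, map_add, hx, hy, add_zero]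
  · intro c x _ hx q
    rw [smul_eq_mul, ← mul_assoc, hx]

theorem sub_X_mul_C_linkDefect_mem (hd₀ : ∀ j, d j i₀ = 0) (hd_ne : ∀ j, d j ≠ 0)
    (hd : ∀ j k, d j ≤ d k → j = k) {p : MvPolynomial σ A} (hp : p ∈ linkMonomialIdeal i₀ d) :
    p - X i₀ * C (linkDefect i₀ b d p) ∈ linkedIdeal i₀ b d := by
  suffices ∀ q, q * p - X i₀ * C (linkDefect i₀ b d (q * p)) ∈ linkedIdeal i₀ b d by
    simpa using this 1
  refine Submodule.span_induction ?_ (by simp) ?_ ?_ hp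
  · rintro _ ⟨e, he | ⟨j, rfl⟩, rfl⟩ q
    · rw [Set.mem_singleton_iff.mp he]
      dsimp only
      rw [← X_pow_eq_monomial, pow_one, mul_comm, linkDefect_X_mul b hd₀, ← mul_sub]
      exact X_mul_sub_C_coeff_zero_mem_linkedIdeal b q
    · have hg : X i₀ * C (b j) + monomial (d j) 1 ∈ linkedIdeal i₀ b d :=
        Ideal.subset_span (Or.inr ⟨j, rfl⟩)
      rw [mul_comm, linkDefect_monomial_mul b hd₀ hd_ne hd]
      convert sub_mem (Ideal.mul_mem_right q _ hg)
        (X_mul_sub_C_coeff_zero_mem_linkedIdeal b (C (b j) * q)) using 1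
      rw [coeff_C_mul, map_neg, map_mul]
      ring
  · intro x y _ _ hx hy q
    convert add_mem (hx q) (hy q) using 1
    rw [mul_add, map_add, map_add]
    ring
  · intro c x _ hx q
    simpa [mul_assoc] using hx (q * c)

theorem mem_linkedIdeal_iff (hd₀ : ∀ j, d j i₀ = 0) (hd_ne : ∀ j, d j ≠ 0)
    (hd : ∀ j k, d j ≤ d k → j = k) {p : MvPolynomial σ A} :
    p ∈ linkedIdeal i₀ b d ↔ p ∈ linkMonomialIdeal i₀ d ∧ linkDefect i₀ b d p = 0 :=
  ⟨fun hp => ⟨linkedIdeal_le_linkMonomialIdeal b hp, linkDefect_eq_zero_of_mem b hd₀ hd_ne hd hp⟩,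
    fun ⟨hp, h⟩ => by simpa [h] using sub_X_mul_C_linkDefect_mem b hd₀ hd_ne hd hp⟩

theorem mem_linkedIdeal_of_C_mul_mem (hd₀ : ∀ j, d j i₀ = 0) (hd_ne : ∀ j, d j ≠ 0)
    (hd : ∀ j k, d j ≤ d k → j = k) {a : A} (ha : a ∈ nonZeroDivisors A)
    {p : MvPolynomial σ A} (h : C a * p ∈ linkedIdeal i₀ b d) : p ∈ linkedIdeal i₀ b d := by
  rw [mem_linkedIdeal_iff b hd₀ hd_ne hd] at h ⊢
  obtain ⟨hp, hdef⟩ := h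
  rw [← smul_eq_C_mul, map_smul, smul_eq_mul, mul_left_mem_nonZeroDivisors_eq_zero_iff ha] at hdef
  exact ⟨mem_ideal_span_monomial_image_of_C_mul ha hp, hdef⟩

end LinkedIdeal

end MvPolynomial

noncomputable def xExponent (N : ℕ) (j : Fin (N + 1)) : Fin 3 →₀ ℕ :=
  Finsupp.single (1 : Fin 3) (N - j) + Finsupp.single 2 (j : ℕ)

theorem xExponent_apply_zero {N : ℕ} (j : Fin (N + 1)) : xExponent N j 0 = 0 := by
  simp [xExponent]

theorem xExponent_ne_zero {N : ℕ} (hN : N ≠ 0) (j : Fin (N + 1)) : xExponent N j ≠ 0 := by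
  intro h
  have h1 : N - j = 0 := by simpa [xExponent] using DFunLike.congr_fun h 1
  have h2 : (j : ℕ) = 0 := by simpa [xExponent] using DFunLike.congr_fun h 2
  omega

theorem eq_of_xExponent_le {N : ℕ} {j k : Fin (N + 1)} (h : xExponent N j ≤ xExponent N k) :
    j = k := by
  have h1 : N - j ≤ N - k := by simpa [xExponent] using h 1
  have h2 : (j : ℕ) ≤ k := by simpa [xExponent] using h 2
  omega

theorem map_exIdeal_sumAlgEquiv (K : Type*) [Field K] (N : ℕ) :
    (exIdeal K N).map (sumAlgEquiv K (Fin 3) (Fin (N + 1))).toRingEquiv =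
      linkedIdeal 0 X (xExponent N) := by
  have hx (i : Fin 3) : sumAlgEquiv K (Fin 3) (Fin (N + 1)) (xv i) = X i :=
    sumAlgEquiv_X_inl _ _ _ i
  have hy (j : Fin (N + 1)) : sumAlgEquiv K (Fin 3) (Fin (N + 1)) (yv j) = C (X j) :=
    sumAlgEquiv_X_inr _ _ _ j
  have hx₀ : sumAlgEquiv K (Fin 3) (Fin (N + 1)) ''
      {xv 0 ^ 2, xv 0 * xv 1, xv 0 * xv 2} = Set.range fun i => X 0 * X i := by
    ext p
    simp [hx, Fin.exists_fin_succ, sq, eq_comm]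
  have hlink : (sumAlgEquiv K (Fin 3) (Fin (N + 1)) ∘ fun j : Fin (N + 1) =>
      xv 0 * yv j + xv 1 ^ (N - (j : ℕ)) * xv 2 ^ (j : ℕ)) =
      fun j => X 0 * C (X j) + monomial (xExponent N j) 1 := by
    funext j
    simp [hx, hy, xExponent, X_pow_eq_monomial, monomial_mul]
  rw [exIdeal, Ideal.map_span, linkedIdeal, Set.image_union, ← Set.range_comp]
  exact congrArg Ideal.span (congrArg₂ _ hx₀ (congrArg Set.range hlink))

/-- `y₀` is a nonzerodivisor on `R/I`. -/
theorem stmt9 {K : Type*} [Field K] (N : ℕ) (hN : 3 ≤ N)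
    (r : MvPolynomial (Fin 3 ⊕ Fin (N + 1)) K) (hr : yv 0 * r ∈ exIdeal K N) :
    r ∈ exIdeal K N := by
  set e := (sumAlgEquiv K (Fin 3) (Fin (N + 1))).toRingEquiv
  rw [← Ideal.apply_mem_of_equiv_iff (f := e), map_exIdeal_sumAlgEquiv] at hr ⊢
  rw [map_mul, show e (yv 0) = C (X 0) from sumAlgEquiv_X_inr _ _ _ 0] at hr
  exact mem_linkedIdeal_of_C_mul_mem X xExponent_apply_zero (xExponent_ne_zero (by omega))
    (fun _ _ => eq_of_xExponent_le) (mem_nonZeroDivisors_of_ne_zero (X_ne_zero 0)) hr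
end

section
/- Let k be an infinite field and let h_1, h_2, h_3 be linearly independent homogeneous polynomials of degree 3 in k[x_1,x_2] with no common (nonconstant) factor. Then x_1(h_1,h_2,h_3) + x_2(h_1,h_2,h_3) spans the full 5-dimensional space of homogeneous degree-4 polynomials in k[x_1,x_2]; equivalently, (x_1,x_2)(h_1,h_2,h_3) = (x_1,x_2)^4 in degree 4. -/
open MvPolynomial

/-!
Let `V` be the span of the `h i` and `T = {q | X 0 * q ∈ V ∧ X 1 * q ∈ V}`. As `X 0` and `X 1`
are coprime, `X 0 • V ⊓ X 1 • V = (X 0 * X 1) • T`, hence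
`dim (X 0 • V ⊔ X 1 • V) = 2 dim V - dim T = 6 - dim T`, and it suffices that `dim T ≤ 1`.
If `dim T ≥ 2`, the same count applied to `T`, whose two translates lie in the `3`-dimensional
`V`, gives some `L ≠ 0` with `X i * X j * L ∈ V` for all `i, j`. Then `L • S₂ ⊆ V`, where `S₂`
is the `3`-dimensional space of quadratic forms, so `V = L • S₂` and `L` is a common factor of
the `h i`; it is not a unit because `L • S₂` lies in degree `3`.
-/

open Module LinearMap Submodule

namespace Submodule

section PairColon

variable {k R : Type*} [Field k] [CommRing R] [Algebra k R]

def pairColon (a b : R) (U : Submodule k R) : Submodule k R :=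
  U.comap (mulLeft k a) ⊓ U.comap (mulLeft k b)

variable {a b : R}

theorem map_mulLeft_sup_map_mulLeft_pairColon_le (U : Submodule k R) :
    (U.pairColon a b).map (mulLeft k a) ⊔ (U.pairColon a b).map (mulLeft k b) ≤ U :=
  sup_le (map_le_iff_le_comap.mpr inf_le_left) (map_le_iff_le_comap.mpr inf_le_right)

variable [IsDomain R]

theorem finrank_map_mulLeft (ha : a ≠ 0) (U : Submodule k R) :
    finrank k (U.map (mulLeft k a)) = finrank k U :=
  (equivMapOfInjective _ (mul_right_injective₀ ha) U).finrank_eq.symm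

theorem finiteDimensional_pairColon (ha : a ≠ 0) (U : Submodule k R) [FiniteDimensional k U] :
    FiniteDimensional k (U.pairColon a b) :=
  have : FiniteDimensional k ((U.pairColon a b).map (mulLeft k a)) :=
    finiteDimensional_of_le (le_sup_left.trans (map_mulLeft_sup_map_mulLeft_pairColon_le U))
  (equivMapOfInjective (mulLeft k a) (mul_right_injective₀ ha) _).symm.finiteDimensional

theorem map_mulLeft_inf_map_mulLeft (hb : Prime b) (hba : ¬b ∣ a) (U : Submodule k R) :
    U.map (mulLeft k a) ⊓ U.map (mulLeft k b) = (U.pairColon a b).map (mulLeft k (a * b)) := by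
  ext p
  simp only [mem_inf, mem_map, pairColon, mem_comap, mulLeft_apply]
  constructor
  · rintro ⟨⟨f, hf, rfl⟩, g, hg, hgf⟩
    obtain ⟨q, rfl⟩ : b ∣ f := (hb.dvd_or_dvd ⟨g, hgf.symm⟩).resolve_left hba
    have hg' : g = a * q := mul_left_cancel₀ hb.ne_zero (by rw [hgf]; ring)
    exact ⟨q, ⟨hg' ▸ hg, hf⟩, by ring⟩
  · rintro ⟨q, ⟨haq, hbq⟩, rfl⟩
    exact ⟨⟨b * q, hbq, by ring⟩, a * q, haq, by ring⟩

theorem finrank_map_mulLeft_sup_add_finrank_pairColon (hb : Prime b) (hba : ¬b ∣ a)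
    (U : Submodule k R) [FiniteDimensional k U] :
    finrank k ↥(U.map (mulLeft k a) ⊔ U.map (mulLeft k b)) + finrank k (U.pairColon a b) =
      2 * finrank k U := by
  have ha : a ≠ 0 := by rintro rfl; exact hba (dvd_zero b)
  have key := finrank_sup_add_finrank_inf_eq (U.map (mulLeft k a)) (U.map (mulLeft k b))
  rw [map_mulLeft_inf_map_mulLeft hb hba, finrank_map_mulLeft (mul_ne_zero ha hb.ne_zero),
    finrank_map_mulLeft ha, finrank_map_mulLeft hb.ne_zero] at key
  omega

end PairColon

end Submodule

namespace MvPolynomial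

section Homogeneous

variable {σ R : Type*} [CommRing R]

instance [Finite σ] (n : ℕ) : Module.Finite R (homogeneousSubmodule σ R n) :=
  Module.Finite.iff_fg.mpr (homogeneousSubmodule_fg σ R n)

theorem map_mulLeft_homogeneousSubmodule_le {p : MvPolynomial σ R} {m : ℕ}
    (hp : p.IsHomogeneous m) (n : ℕ) :
    (homogeneousSubmodule σ R n).map (mulLeft R p) ≤ homogeneousSubmodule σ R (m + n) := by
  rintro _ ⟨q, hq, rfl⟩
  exact hp.mul hq

theorem not_isUnit_of_map_mulLeft_homogeneousSubmodule_le [IsDomain R] [Nonempty σ]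
    {L : MvPolynomial σ R} {m n : ℕ} (hmn : m ≠ n)
    (h : (homogeneousSubmodule σ R m).map (mulLeft R L) ≤ homogeneousSubmodule σ R n) :
    ¬IsUnit L := by
  intro hu
  obtain ⟨c, hc, rfl⟩ := isUnit_iff_eq_C_of_isReduced.mp hu
  obtain ⟨i⟩ := ‹Nonempty σ›
  have hm : (C c * X i ^ m).IsHomogeneous m := by
    simpa using (isHomogeneous_C σ c).mul (isHomogeneous_X_pow i m)
  have hn : (C c * X i ^ m).IsHomogeneous n := h (mem_map_of_mem (isHomogeneous_X_pow i m))
  exact hmn <| hm.inj_right hn <|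
    mul_ne_zero (C_ne_zero.mpr hc.ne_zero) (pow_ne_zero _ (X_ne_zero i))

end Homogeneous

section TwoVariables

variable {k : Type*} [Field k]

theorem homogeneousSubmodule_fin_two_eq_span (n : ℕ) :
    homogeneousSubmodule (Fin 2) k n =
      span k (Set.range fun j : Fin (n + 1) =>
        (X 0 ^ (n - j) * X 1 ^ (j : ℕ) : MvPolynomial (Fin 2) k)) := by
  refine le_antisymm ?_ (span_le.mpr ?_)
  · rw [homogeneousSubmodule_eq_finsupp_supported, AddMonoidAlgebra.supported_eq_span_single]
    refine span_le.mpr ?_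
    rintro _ ⟨d, hd, rfl⟩
    rw [Set.mem_ofPred_eq, Finsupp.degree_eq_sum, Fin.sum_univ_two] at hd
    refine subset_span ⟨⟨d 1, by omega⟩, ?_⟩
    change X 0 ^ (n - d 1) * X 1 ^ d 1 = monomial d 1
    rw [X_pow_eq_monomial, X_pow_eq_monomial, monomial_mul, one_mul]
    refine congrArg (monomial · 1) (Finsupp.ext fun i => ?_)
    fin_cases i <;> simp [← hd]
  · rintro _ ⟨j, rfl⟩
    have := (isHomogeneous_X_pow (R := k) (0 : Fin 2) (n - j)).mul (isHomogeneous_X_pow 1 (j : ℕ))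
    rwa [Nat.sub_add_cancel j.is_le] at this

theorem linearIndependent_X_pow_mul_X_pow (n : ℕ) :
    LinearIndependent k fun j : Fin (n + 1) =>
      (X 0 ^ (n - j) * X 1 ^ (j : ℕ) : MvPolynomial (Fin 2) k) := by
  let e : Fin (n + 1) → Fin 2 →₀ ℕ := fun j =>
    Finsupp.single 0 (n - j) + Finsupp.single 1 (j : ℕ)
  have he : Function.Injective e := fun i j hij => by
    simpa [e, Fin.ext_iff] using congrArg (· 1) hij
  have hmon : (fun j : Fin (n + 1) => (X 0 ^ (n - j) * X 1 ^ (j : ℕ) : MvPolynomial (Fin 2) k)) =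
      basisMonomials (Fin 2) k ∘ e := by
    ext1 j
    simp [e, X_pow_eq_monomial, monomial_mul]
  exact hmon ▸ (basisMonomials (Fin 2) k).linearIndependent.comp e he

theorem finrank_homogeneousSubmodule_fin_two (n : ℕ) :
    finrank k (homogeneousSubmodule (Fin 2) k n) = n + 1 := by
  rw [homogeneousSubmodule_fin_two_eq_span,
    finrank_span_eq_card (linearIndependent_X_pow_mul_X_pow n), Fintype.card_fin]

theorem X_one_not_dvd_X_zero : ¬(X 1 : MvPolynomial (Fin 2) k) ∣ X 0 := by
  simp

theorem dvd_of_map_mulLeft_homogeneousSubmodule_le {L : MvPolynomial (Fin 2) k} (hL : L ≠ 0)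
    {n : ℕ} {V : Submodule k (MvPolynomial (Fin 2) k)} [FiniteDimensional k V]
    (hV : finrank k V ≤ n + 1) (h : (homogeneousSubmodule (Fin 2) k n).map (mulLeft k L) ≤ V)
    {v : MvPolynomial (Fin 2) k} (hv : v ∈ V) : L ∣ v := by
  have hVL := eq_of_le_of_finrank_le h
    (by rwa [finrank_map_mulLeft hL, finrank_homogeneousSubmodule_fin_two])
  obtain ⟨q, -, rfl⟩ := hVL ▸ hv
  exact dvd_mul_right L q

theorem exists_map_mulLeft_homogeneousSubmodule_two_le {V : Submodule k (MvPolynomial (Fin 2) k)}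
    [FiniteDimensional k V] (hV : finrank k V ≤ 3)
    (hT : 2 ≤ finrank k (V.pairColon (X 0) (X 1))) :
    ∃ L ≠ 0, (homogeneousSubmodule (Fin 2) k 2).map (mulLeft k L) ≤ V := by
  set T := V.pairColon (X 0) (X 1)
  have := finiteDimensional_pairColon (b := X 1) (X_ne_zero 0) V
  have hsum := finrank_map_mulLeft_sup_add_finrank_pairColon X_prime X_one_not_dvd_X_zero T
  have hTT : T.pairColon (X 0) (X 1) ≠ ⊥ := by
    have hle : finrank k ↥(T.map (mulLeft k (X 0)) ⊔ T.map (mulLeft k (X 1))) ≤ finrank k V :=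
      finrank_mono (map_mulLeft_sup_map_mulLeft_pairColon_le V)
    intro hbot
    rw [hbot, finrank_bot] at hsum
    omega
  obtain ⟨L, hLT, hL⟩ := exists_mem_ne_zero_of_ne_bot hTT
  simp only [T, pairColon, mem_inf, mem_comap, mulLeft_apply] at hLT
  obtain ⟨⟨h00, h10⟩, -, h11⟩ := hLT
  refine ⟨L, hL, ?_⟩
  rw [homogeneousSubmodule_fin_two_eq_span, Submodule.map_span, span_le]
  rintro _ ⟨_, ⟨j, rfl⟩, rfl⟩
  fin_cases j <;> simp only [Fin.isValue, tsub_zero, Nat.add_one_sub_one, tsub_self,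
    pow_zero, pow_one, mul_one, one_mul, mulLeft_apply, SetLike.mem_coe]
  · convert h00 using 1; ring
  · convert h10 using 1; ring
  · convert h11 using 1; ring

end TwoVariables

end MvPolynomial

theorem stmt10_general {k : Type*} [Field k]
    (h : Fin 3 → MvPolynomial (Fin 2) k)
    (hdeg : ∀ i, (h i).IsHomogeneous 3)
    (hli : LinearIndependent k h)
    (hgcd : ∀ p : MvPolynomial (Fin 2) k, (∀ i, p ∣ h i) → IsUnit p) :
    Submodule.map (LinearMap.mulLeft k (X 0 : MvPolynomial (Fin 2) k))
        (Submodule.span k (Set.range h)) ⊔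
      Submodule.map (LinearMap.mulLeft k (X 1 : MvPolynomial (Fin 2) k))
        (Submodule.span k (Set.range h)) =
      homogeneousSubmodule (Fin 2) k 4 := by
  set V := span k (Set.range h)
  have : FiniteDimensional k V := FiniteDimensional.span_of_finite k (Set.finite_range h)
  have hV : finrank k V = 3 := by simpa using finrank_span_eq_card hli
  have hV3 : V ≤ homogeneousSubmodule (Fin 2) k 3 := span_le.mpr (Set.range_subset_iff.mpr hdeg)
  have hT : finrank k (V.pairColon (X 0) (X 1)) ≤ 1 := by
    by_contra! hT
    obtain ⟨L, hL, hLV⟩ := exists_map_mulLeft_homogeneousSubmodule_two_le hV.le hT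
    have hdvd : ∀ i, L ∣ h i := fun i =>
      dvd_of_map_mulLeft_homogeneousSubmodule_le hL hV.le hLV (subset_span ⟨i, rfl⟩)
    exact not_isUnit_of_map_mulLeft_homogeneousSubmodule_le (by norm_num) (hLV.trans hV3)
      (hgcd L hdvd)
  refine eq_of_le_of_finrank_le (sup_le ?_ ?_) ?_
  · exact (map_mono hV3).trans (map_mulLeft_homogeneousSubmodule_le (isHomogeneous_X k 0) 3)
  · exact (map_mono hV3).trans (map_mulLeft_homogeneousSubmodule_le (isHomogeneous_X k 1) 3)
  · have := finrank_map_mulLeft_sup_add_finrank_pairColon X_prime X_one_not_dvd_X_zero V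
    rw [finrank_homogeneousSubmodule_fin_two]
    omega

theorem stmt10 {k : Type*} [Field k] [Infinite k]
    (h : Fin 3 → MvPolynomial (Fin 2) k)
    (hdeg : ∀ i, (h i).IsHomogeneous 3)
    (hli : LinearIndependent k h)
    (hgcd : ∀ p : MvPolynomial (Fin 2) k, (∀ i, p ∣ h i) → IsUnit p) :
    Submodule.map (LinearMap.mulLeft k (X 0 : MvPolynomial (Fin 2) k))
        (Submodule.span k (Set.range h)) ⊔
      Submodule.map (LinearMap.mulLeft k (X 1 : MvPolynomial (Fin 2) k))
        (Submodule.span k (Set.range h)) =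
      homogeneousSubmodule (Fin 2) k 4 :=
  stmt10_general h hdeg hli hgcd
end

section
/- Let k be a field and q ≥ 1 an integer such that q = 1 or q is a power of the characteristic of k. Suppose w_1, w_2 ∈ k[x_1,x_2] are homogeneous of the same degree and for infinitely many distinct scalars γ ∈ k there exist a homogeneous y_γ and scalars a_γ, b_γ with (x_1 + γx_2)^q y_γ = a_γ x_1^q w_1 + b_γ x_2^q w_2. Then either w_1 = c·w_2 for some scalar c, or w_1, w_2 ∈ (x_1^q, x_2^q). -/
/-!
Write `ℓ_γ = x₁ + γ x₂`. As `q` is `1` or a power of the characteristic,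
`ℓ_γ ^ q = x₁ ^ q + γ ^ q x₂ ^ q`; substituting this for `x₁ ^ q` in the relation, and using that
the prime `ℓ_γ` does not divide `x₂`, gives `ℓ_γ ^ q ∣ b_γ w₂ - a_γ γ ^ q w₁`. If two of the vectors
`(a_γ γ ^ q, b_γ)` are linearly independent, `w₁` and `w₂` are combinations of two elements of
`(x₁ ^ q, x₂ ^ q)`. Otherwise all of them lie on one line, so one fixed combination `b w₂ - a w₁`
is divisible by infinitely many pairwise non-associate `ℓ_γ`, hence vanishes.
-/

open MvPolynomial

section LinearAlgebra

variable {K M : Type*} [Field K] [AddCommGroup M] [Module K M]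

lemma Submodule.mem_and_mem_of_smul_sub_smul_mem (N : Submodule K M) {w₁ w₂ : M}
    {a b a' b' : K} (hdet : a * b' - a' * b ≠ 0)
    (h : b • w₂ - a • w₁ ∈ N) (h' : b' • w₂ - a' • w₁ ∈ N) : w₁ ∈ N ∧ w₂ ∈ N := by
  constructor
  · rw [← N.smul_mem_iff hdet,
      show (a * b' - a' * b) • w₁ = b • (b' • w₂ - a' • w₁) - b' • (b • w₂ - a • w₁) by module]
    exact N.sub_mem (N.smul_mem _ h') (N.smul_mem _ h)
  · rw [← N.smul_mem_iff hdet,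
      show (a * b' - a' * b) • w₂ = a • (b' • w₂ - a' • w₁) - a' • (b • w₂ - a • w₁) by module]
    exact N.sub_mem (N.smul_mem _ h') (N.smul_mem _ h)

lemma exists_smul_sub_smul_eq_smul {a b a₀ b₀ : K} (hab : a ≠ 0 ∨ b ≠ 0)
    (hdet : a * b₀ - a₀ * b = 0) (w₁ w₂ : M) :
    ∃ c : K, b₀ • w₂ - a₀ • w₁ = c • (b • w₂ - a • w₁) := by
  rcases hab with ha | hb
  · refine ⟨a₀ / a, ?_⟩
    have hb₀ : b₀ = a₀ / a * b := by field_simp; linear_combination hdet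
    rw [hb₀, smul_sub, smul_smul, smul_smul, div_mul_cancel₀ _ ha]
  · refine ⟨b₀ / b, ?_⟩
    have ha₀ : a₀ = b₀ / b * a := by field_simp; linear_combination -hdet
    rw [ha₀, smul_sub, smul_smul, smul_smul, div_mul_cancel₀ _ hb]

end LinearAlgebra

lemma exists_eq_ringExpChar_pow {R : Type*} [Semiring R] {q : ℕ} (hq0 : q ≠ 0)
    (hq : q = 1 ∨ ∃ e : ℕ, q = ringChar R ^ e) : ∃ e : ℕ, q = ringExpChar R ^ e := by
  rcases hq with rfl | ⟨e, rfl⟩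
  · exact ⟨0, (pow_zero _).symm⟩
  rcases eq_or_ne (ringChar R) 0 with h0 | h0
  · obtain rfl : e = 0 := by_contra fun he ↦ hq0 (by rw [h0, zero_pow he])
    exact ⟨0, by simp⟩
  · exact ⟨e, by rw [ringExpChar, max_eq_left (Nat.one_le_iff_ne_zero.mpr h0)]⟩

section LinearForm

variable {k : Type*} [Field k]

noncomputable def linearForm (γ : k) : MvPolynomial (Fin 2) k := X 0 + C γ * X 1

lemma finSuccEquiv_linearForm (γ : k) :
    finSuccEquiv k 1 (linearForm γ) = Polynomial.X - Polynomial.C (-(C γ * X 0)) := by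
  have hC : finSuccEquiv k 1 (C γ) = Polynomial.C (C γ) := by
    rw [← algebraMap_eq, AlgEquiv.commutes]
    rfl
  rw [linearForm, map_add, map_mul, show (1 : Fin 2) = Fin.succ 0 from rfl, finSuccEquiv_X_zero,
    finSuccEquiv_X_succ, hC, ← Polynomial.C_mul, map_neg, sub_neg_eq_add]

lemma prime_linearForm (γ : k) : Prime (linearForm γ) :=
  (MulEquiv.prime_iff (finSuccEquiv k 1)).mp <| by
    rw [finSuccEquiv_linearForm]
    exact Polynomial.prime_X_sub_C _

lemma linearForm_not_dvd_X_one (γ : k) : ¬ linearForm γ ∣ X 1 := by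
  rintro ⟨u, hu⟩
  have := congrArg (aeval ![-(C γ * X 1), X 1]) hu
  simp only [linearForm, map_add, map_mul, aeval_X, aeval_C, algebraMap_eq, Matrix.cons_val_zero,
    Matrix.cons_val_one, neg_add_cancel, zero_mul] at this
  exact X_ne_zero 1 this

lemma eq_zero_of_linearForm_dvd {f : MvPolynomial (Fin 2) k} {T : Set k} (hT : T.Infinite)
    (h : ∀ γ ∈ T, linearForm γ ∣ f) : f = 0 := by
  suffices finSuccEquiv k 1 f = 0 by simpa using this
  refine Polynomial.eq_zero_of_infinite_isRoot _
    (Set.Infinite.mono ?_ (hT.image (f := fun γ ↦ -(C γ * X 0)) ?_))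
  · rintro _ ⟨γ, hγ, rfl⟩
    rw [Set.mem_ofPred_eq, ← Polynomial.dvd_iff_isRoot, ← finSuccEquiv_linearForm]
    exact map_dvd _ (h γ hγ)
  · intro γ₁ _ γ₂ _ h
    exact C_injective _ _ (mul_right_cancel₀ (X_ne_zero 0) (neg_inj.mp h))

lemma linearForm_pow {q : ℕ} (hq0 : q ≠ 0) (hq : q = 1 ∨ ∃ e : ℕ, q = ringChar k ^ e) (γ : k) :
    linearForm γ ^ q = X 0 ^ q + C (γ ^ q) * X 1 ^ q := by
  obtain ⟨e, rfl⟩ := exists_eq_ringExpChar_pow hq0 hq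
  have := expChar_of_injective_algebraMap (C_injective (Fin 2) k) (ringExpChar k)
  rw [linearForm, add_pow_expChar_pow, mul_pow, C_pow]

lemma linearForm_pow_mem_span {q : ℕ} (hq0 : q ≠ 0) (hq : q = 1 ∨ ∃ e : ℕ, q = ringChar k ^ e)
    (γ : k) : linearForm γ ^ q ∈ Ideal.span {(X 0 : MvPolynomial (Fin 2) k) ^ q, X 1 ^ q} := by
  rw [linearForm_pow hq0 hq, Ideal.mem_span_pair]
  exact ⟨1, C (γ ^ q), by rw [one_mul]⟩

lemma linearForm_pow_dvd_smul_sub_smul {q : ℕ} (hq0 : q ≠ 0)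
    (hq : q = 1 ∨ ∃ e : ℕ, q = ringChar k ^ e) {γ a b : k} {y w₁ w₂ : MvPolynomial (Fin 2) k}
    (h : linearForm γ ^ q * y = C a * (X 0 ^ q * w₁) + C b * (X 1 ^ q * w₂)) :
    linearForm γ ^ q ∣ b • w₂ - (a * γ ^ q) • w₁ := by
  have hp := prime_linearForm γ
  refine hp.pow_dvd_of_dvd_mul_left (a := X 1 ^ q) q
    (fun h ↦ linearForm_not_dvd_X_one γ (hp.dvd_of_dvd_pow h)) ⟨y - C a * w₁, ?_⟩
  rw [smul_eq_C_mul, smul_eq_C_mul, map_mul]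
  linear_combination -h + C a * w₁ * linearForm_pow hq0 hq γ

end LinearForm

section MainArgument

variable {k : Type*} [Field k] {q : ℕ} {w₁ w₂ : MvPolynomial (Fin 2) k}

lemma mem_span_of_linearForm_pow_dvd (hq0 : q ≠ 0) (hq : q = 1 ∨ ∃ e : ℕ, q = ringChar k ^ e)
    {γ γ' a b a' b' : k} (hdet : a * γ ^ q * b' - a' * γ' ^ q * b ≠ 0)
    (h : linearForm γ ^ q ∣ b • w₂ - (a * γ ^ q) • w₁)
    (h' : linearForm γ' ^ q ∣ b' • w₂ - (a' * γ' ^ q) • w₁) :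
    w₁ ∈ Ideal.span {(X 0 : MvPolynomial (Fin 2) k) ^ q, X 1 ^ q} ∧
      w₂ ∈ Ideal.span {(X 0 : MvPolynomial (Fin 2) k) ^ q, X 1 ^ q} :=
  Submodule.mem_and_mem_of_smul_sub_smul_mem
    ((Ideal.span {(X 0 : MvPolynomial (Fin 2) k) ^ q, X 1 ^ q}).restrictScalars k) hdet
    (Ideal.mem_of_dvd _ h (linearForm_pow_mem_span hq0 hq γ))
    (Ideal.mem_of_dvd _ h' (linearForm_pow_mem_span hq0 hq γ'))

lemma exists_eq_smul_of_linearForm_pow_dvd (hq0 : q ≠ 0) {S : Set k} (hS : S.Infinite)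
    {a b : k → k} (hab : ∀ γ ∈ S, a γ ≠ 0 ∨ b γ • w₂ ≠ 0)
    (hdvd : ∀ γ ∈ S, linearForm γ ^ q ∣ b γ • w₂ - (a γ * γ ^ q) • w₁)
    (hdet : ∀ γ ∈ S, ∀ γ' ∈ S, a γ * γ ^ q * b γ' - a γ' * γ' ^ q * b γ = 0) :
    ∃ c : k, w₁ = c • w₂ := by
  have hS₀ : (S \ {0}).Infinite := hS.sdiff (Set.finite_singleton 0)
  obtain ⟨γ₀, hγ₀, hγ₀0 : γ₀ ≠ 0⟩ := hS₀.nonempty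
  have hw : b γ₀ • w₂ = (a γ₀ * γ₀ ^ q) • w₁ := by
    refine sub_eq_zero.mp (eq_zero_of_linearForm_dvd hS₀ ?_)
    rintro γ ⟨hγ, hγ0 : γ ≠ 0⟩
    obtain ⟨c, hc⟩ := exists_smul_sub_smul_eq_smul
      ((hab γ hγ).imp (mul_ne_zero · (pow_ne_zero q hγ0)) left_ne_zero_of_smul)
      (hdet γ hγ γ₀ hγ₀) w₁ w₂
    rw [hc, smul_eq_C_mul]
    exact ((dvd_pow_self _ hq0).trans (hdvd γ hγ)).mul_left _
  by_cases ha : a γ₀ = 0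
  · rw [ha, zero_mul, zero_smul] at hw
    exact absurd hw ((hab γ₀ hγ₀).resolve_left (not_not.mpr ha))
  · refine ⟨(a γ₀ * γ₀ ^ q)⁻¹ * b γ₀, ?_⟩
    rw [mul_smul, hw, inv_smul_smul₀ (mul_ne_zero ha (pow_ne_zero q hγ₀0))]

end MainArgument

theorem stmt14_general {k : Type*} [Field k] (q : ℕ) (hq1 : 1 ≤ q)
    (hq : q = 1 ∨ ∃ e : ℕ, q = ringChar k ^ e)
    (w₁ w₂ : MvPolynomial (Fin 2) k)
    (S : Set k) (hS : S.Infinite)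
    (hmain : ∀ γ ∈ S, ∃ (y : MvPolynomial (Fin 2) k) (e : ℕ) (a b : k),
      y ≠ 0 ∧ y.IsHomogeneous e ∧
      (X 0 + C γ * X 1) ^ q * y = C a * (X 0 ^ q * w₁) + C b * (X 1 ^ q * w₂)) :
    (∃ c : k, w₁ = c • w₂) ∨
      (w₁ ∈ Ideal.span {(X 0 : MvPolynomial (Fin 2) k) ^ q, X 1 ^ q} ∧
        w₂ ∈ Ideal.span {(X 0 : MvPolynomial (Fin 2) k) ^ q, X 1 ^ q}) := by
  have hq0 : q ≠ 0 := Nat.one_le_iff_ne_zero.mp hq1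
  have hrel : ∀ γ ∈ S, ∃ a b : k, (a ≠ 0 ∨ b • w₂ ≠ 0) ∧
      linearForm γ ^ q ∣ b • w₂ - (a * γ ^ q) • w₁ := by
    intro γ hγ
    obtain ⟨y, -, a, b, hy, -, h⟩ := hmain γ hγ
    refine ⟨a, b, ?_, linearForm_pow_dvd_smul_sub_smul hq0 hq h⟩
    by_contra! ⟨rfl, hb⟩
    refine mul_ne_zero (pow_ne_zero q (prime_linearForm γ).ne_zero) hy ?_
    rw [linearForm, h, map_zero, zero_mul, zero_add, ← smul_eq_C_mul, ← mul_smul_comm, hb, mul_zero]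
  choose! a b hab hdvd using hrel
  by_cases hdet : ∀ γ ∈ S, ∀ γ' ∈ S, a γ * γ ^ q * b γ' - a γ' * γ' ^ q * b γ = 0
  · exact .inl (exists_eq_smul_of_linearForm_pow_dvd hq0 hS hab hdvd hdet)
  · push Not at hdet
    obtain ⟨γ, hγ, γ', hγ', hdet⟩ := hdet
    exact .inr (mem_span_of_linearForm_pow_dvd hq0 hq hdet (hdvd γ hγ) (hdvd γ' hγ'))

theorem stmt14 {k : Type*} [Field k] (q : ℕ) (hq1 : 1 ≤ q)
    (hq : q = 1 ∨ ∃ e : ℕ, q = ringChar k ^ e)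
    (w₁ w₂ : MvPolynomial (Fin 2) k) (D : ℕ)
    (hw₁ : w₁.IsHomogeneous D) (hw₂ : w₂.IsHomogeneous D)
    (S : Set k) (hS : S.Infinite)
    (hmain : ∀ γ ∈ S, ∃ (y : MvPolynomial (Fin 2) k) (e : ℕ) (a b : k),
      y ≠ 0 ∧ y.IsHomogeneous e ∧
      (X 0 + C γ * X 1) ^ q * y = C a * (X 0 ^ q * w₁) + C b * (X 1 ^ q * w₂)) :
    (∃ c : k, w₁ = c • w₂) ∨
      (w₁ ∈ Ideal.span {(X 0 : MvPolynomial (Fin 2) k) ^ q, X 1 ^ q} ∧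
        w₂ ∈ Ideal.span {(X 0 : MvPolynomial (Fin 2) k) ^ q, X 1 ^ q}) :=
  stmt14_general q hq1 hq w₁ w₂ S hS hmain
end

section
/- Let k be a field of characteristic not dividing q (with q > 1). If y, w_1, w_2 ∈ k[x_1,x_2,...] are homogeneous and there exists γ ∈ k, γ ≠ 0, with (x_1 + γx_2)^q y = a x_1^q w_1 + b x_2^q w_2 where a,b ∈ k not both zero, then y ∈ (x_1, x_2). -/
open MvPolynomial

theorem stmt15 {k : Type*} [Field k] (q : ℕ) (hq : 1 < q)
    (hchar : ¬ (ringChar k ∣ q))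
    (y w₁ w₂ : MvPolynomial (Fin 2) k) (dy d₁ d₂ : ℕ)
    (hy : y.IsHomogeneous dy) (hw₁ : w₁.IsHomogeneous d₁) (hw₂ : w₂.IsHomogeneous d₂)
    (γ : k) (hγ : γ ≠ 0) (a b : k) (hab : ¬ (a = 0 ∧ b = 0))
    (heq : (X 0 + C γ * X 1) ^ q * y = C a * (X 0 ^ q * w₁) + C b * (X 1 ^ q * w₂)) :
    y ∈ Ideal.span {(X 0 : MvPolynomial (Fin 2) k), X 1} := by
  classical
  set m₀ : Fin 2 →₀ ℕ := Finsupp.single 0 (q-1) + Finsupp.single 1 1 with hm₀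
  have hm₀deg : Finsupp.degree m₀ = q := by
    rw [hm₀, Finsupp.degree_eq_weight_one, map_add,
      Finsupp.weight_apply, Finsupp.weight_apply, Finsupp.sum_single_index,
      Finsupp.sum_single_index] <;> simp <;> omega
  have hm₀0 : m₀ 0 = q - 1 := by simp [hm₀, Finsupp.single_apply]
  have hm₀1 : m₀ 1 = 1 := by simp [hm₀, Finsupp.single_apply]
  -- homogeneity of (X 0 + C γ * X 1)^q
  have hP : ((X 0 + C γ * X 1 : MvPolynomial (Fin 2) k) ^ q).IsHomogeneous q := by
    have h1 : (X 0 + C γ * X 1 : MvPolynomial (Fin 2) k).IsHomogeneous 1 := by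
      apply (isHomogeneous_X k 0).add
      simpa using (isHomogeneous_C (Fin 2) γ).mul (isHomogeneous_X k 1)
    simpa using h1.pow q
  -- coefficient of m₀ in (X0 + γ X1)^q is q * γ
  have hterm : ∀ i, i ≤ q → coeff m₀ ((X 0 : MvPolynomial (Fin 2) k) ^ i *
      (C γ * X 1) ^ (q - i) * (q.choose i : MvPolynomial (Fin 2) k)) =
      if i = q - 1 then (q : k) * γ else 0 := by
    intro i hi
    rw [mul_pow, ← C_pow, ← map_natCast (C : k →+* MvPolynomial (Fin 2) k),
      X_pow_eq_monomial, X_pow_eq_monomial, C_apply, C_apply]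
    simp only [monomial_mul, coeff_monomial, one_mul, mul_one, zero_add, add_zero]
    by_cases hiq : i = q - 1
    · subst hiq
      have hch : q.choose (q-1) = q := by
        rw [Nat.choose_symm (by omega : 1 ≤ q), Nat.choose_one_right]
      rw [if_pos (by rw [hm₀, show q - (q-1) = 1 by omega]), if_pos rfl,
        show q - (q-1) = 1 by omega, pow_one, hch]
      ring
    · rw [if_neg, if_neg hiq]
      intro h
      have h0 := DFunLike.congr_fun h 0
      simp [Finsupp.single_apply, hm₀] at h0
      omega
  have hPcoeff : coeff m₀ ((X 0 + C γ * X 1 : MvPolynomial (Fin 2) k) ^ q) = (q : k) * γ := by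
    rw [add_pow, coeff_sum, Finset.sum_eq_single (q-1)]
    · rw [hterm (q-1) (by omega), if_pos rfl]
    · intro i hi hne
      rw [hterm i (by simpa using Nat.lt_succ_iff.mp (Finset.mem_range.mp hi)), if_neg hne]
    · intro h
      exact absurd (Finset.mem_range.2 (by omega)) h
  -- extract coefficient m₀ from heq
  have hL : coeff m₀ ((X 0 + C γ * X 1 : MvPolynomial (Fin 2) k) ^ q * y)
      = (q : k) * γ * coeff 0 y := by
    rw [coeff_mul, Finset.sum_eq_single (m₀, 0)]
    · rw [hPcoeff]
    · rintro ⟨m₁, m₂⟩ hmem hne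
      dsimp only at hmem hne ⊢
      have hadd : m₁ + m₂ = m₀ := Finset.HasAntidiagonal.mem_antidiagonal.mp hmem
      have hm₂ : m₂ ≠ 0 := by
        rintro rfl
        exact hne (by simpa using hadd)
      have hdeg : Finsupp.degree m₁ + Finsupp.degree m₂ = q := by
        rw [← hm₀deg, ← hadd, Finsupp.degree_eq_weight_one, map_add]
      have hdpos : 0 < Finsupp.degree m₂ := by
        rcases Nat.eq_zero_or_pos (Finsupp.degree m₂) with h | h
        · exact absurd ((Finsupp.degree_eq_zero_iff _).mp h) hm₂
        · exact h
      rw [hP.coeff_eq_zero (by omega), zero_mul]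
    · intro h
      exact absurd (Finset.HasAntidiagonal.mem_antidiagonal.mpr (by simp)) h
  have hR1 : coeff m₀ ((X 0 : MvPolynomial (Fin 2) k) ^ q * w₁) = 0 := by
    rw [coeff_mul]
    apply Finset.sum_eq_zero
    rintro ⟨m₁, m₂⟩ hmem
    dsimp only at hmem ⊢
    have hadd : m₁ + m₂ = m₀ := Finset.HasAntidiagonal.mem_antidiagonal.mp hmem
    rw [coeff_X_pow, if_neg, zero_mul]
    rintro rfl
    have := DFunLike.congr_fun hadd 0
    simp [Finsupp.single_apply] at this
    omega
  have hR2 : coeff m₀ ((X 1 : MvPolynomial (Fin 2) k) ^ q * w₂) = 0 := by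
    rw [coeff_mul]
    apply Finset.sum_eq_zero
    rintro ⟨m₁, m₂⟩ hmem
    dsimp only at hmem ⊢
    have hadd : m₁ + m₂ = m₀ := Finset.HasAntidiagonal.mem_antidiagonal.mp hmem
    rw [coeff_X_pow, if_neg, zero_mul]
    rintro rfl
    have := DFunLike.congr_fun hadd 1
    simp [Finsupp.single_apply] at this
    omega
  have hcoeff := congrArg (coeff m₀) heq
  rw [hL, coeff_add, coeff_C_mul, coeff_C_mul, hR1, hR2, mul_zero, mul_zero, add_zero] at hcoeff
  -- so coeff 0 y = 0
  have hqk : (q : k) ≠ 0 := fun h =>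
    hchar ((@CharP.cast_eq_zero_iff k _ (ringChar k) (ringChar.charP k) q).mp h)
  have hy0 : coeff 0 y = 0 := by
    rcases mul_eq_zero.mp hcoeff with h | h
    · rcases mul_eq_zero.mp h with h' | h'
      · exact absurd h' hqk
      · exact absurd h' hγ
    · exact h
  have himg : ({(X 0 : MvPolynomial (Fin 2) k), X 1} : Set (MvPolynomial (Fin 2) k))
      = X '' Set.univ := by
    rw [Set.image_univ]
    ext p
    constructor
    · rintro (rfl | rfl)
      exacts [⟨0, rfl⟩, ⟨1, rfl⟩]
    · rintro ⟨i, rfl⟩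
      fin_cases i
      · exact Or.inl rfl
      · exact Or.inr rfl
  rw [himg, mem_ideal_span_X_image]
  intro m hm
  by_contra hcon
  push_neg at hcon
  have hmz : m = 0 := by
    ext i
    fin_cases i <;> simpa using hcon _ (Set.mem_univ _)
  rw [mem_support_iff, hmz] at hm
  exact hm hy0
end
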